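/- arXiv:1105.2130 — 7 statements merged into one kernel-verified Lean document; each statement's English description precedes it below -/
import Mathlib

section
/- Let ρ be a probability density on I = [−1,1] with first moment c₁ = 0, and S_ρ its Stieltjes transform. For any t with 0 < t ≤ 1, the equation t + (1−t)·z·S_ρ(z) = 0 has no solution z ∈ ℂ \ [−1,1]. -/
/-!
If `t < 1`, the equation says `z S(z) = -s` with `s = t / (1 - t) > 0`. Off the real axis this is
impossible: `Im S(z) = -Im z ∫ ρ(u) / |z - u|²` has the sign of `-Im z`, whereas `Im (-s / z)` has
the sign of `Im z`. On the real axis, for `x ∉ [a, b] ∋ 0` every `x / (x - u)` with `u ∈ [a, b]`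
is nonnegative, so `x S(x) ≥ 0`.
-/

open MeasureTheory Set

open Complex in
theorem Complex.im_ofReal_div_sub (r : ℝ) (z : ℂ) (u : ℝ) :
    ((r : ℂ) / (z - u)).im = -z.im * (r / normSq (z - u)) := by
  simp only [div_im, sub_re, sub_im, ofReal_re, ofReal_im]
  ring

section Stieltjes

variable {K : Set ℝ} {ρ : ℝ → ℝ} {z : ℂ}

theorem integrableOn_ofReal_div_sub (hK : IsCompact K) (hρ : IntegrableOn ρ K)
    (hz : z ∉ (fun x : ℝ => (x : ℂ)) '' K) :
    IntegrableOn (fun u : ℝ => (ρ u : ℂ) / (z - u)) K := by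
  have hne : ∀ u ∈ K, z - u ≠ 0 := fun u hu h => hz ⟨u, hu, (sub_eq_zero.1 h).symm⟩
  simpa only [div_eq_mul_inv] using IntegrableOn.mul_continuousOn (g := fun u => (ρ u : ℂ))
    (g' := fun u : ℝ => (z - u)⁻¹) hρ.ofReal (ContinuousOn.inv₀ (by fun_prop) hne) hK

theorem im_integral_ofReal_div_sub (hint : IntegrableOn (fun u : ℝ => (ρ u : ℂ) / (z - u)) K) :
    (∫ u in K, (ρ u : ℂ) / (z - u)).im = -z.im * ∫ u in K, ρ u / Complex.normSq (z - u) := by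
  have h := integral_im hint
  simp only [RCLike.im_to_complex] at h
  rw [← h, ← integral_const_mul]
  simp only [Complex.im_ofReal_div_sub]

theorem im_eq_zero_of_mul_integral_ofReal_div_sub_eq_neg (hK : IsCompact K)
    (hρ : ∀ u ∈ K, 0 ≤ ρ u) (hρint : IntegrableOn ρ K) (hz : z ∉ (fun x : ℝ => (x : ℂ)) '' K)
    {s : ℝ} (hs : 0 < s) (h : z * ∫ u in K, (ρ u : ℂ) / (z - u) = -s) : z.im = 0 := by
  have hz0 : z ≠ 0 := by rintro rfl; simp [hs.ne'] at h
  have hJ : 0 ≤ ∫ u in K, ρ u / Complex.normSq (z - u) :=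
    setIntegral_nonneg hK.measurableSet fun u hu => div_nonneg (hρ u hu) (Complex.normSq_nonneg _)
  have him := im_integral_ofReal_div_sub (integrableOn_ofReal_div_sub hK hρint hz)
  have hS : ∫ u in K, (ρ u : ℂ) / (z - u) = -s / z := eq_div_of_mul_eq hz0 (by rw [mul_comm, h])
  rw [hS, Complex.div_im] at him
  have hpos : 0 < (∫ u in K, ρ u / Complex.normSq (z - u)) + s / Complex.normSq z :=
    add_pos_of_nonneg_of_pos hJ (div_pos hs (Complex.normSq_pos.2 hz0))
  refine (mul_eq_zero.1 ?_).resolve_right hpos.ne'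
  simp only [Complex.neg_re, Complex.neg_im, Complex.ofReal_re, Complex.ofReal_im] at him
  linear_combination him

end Stieltjes

theorem zero_le_mul_integral_div_sub {a b x : ℝ} {ρ : ℝ → ℝ} (ha : a ≤ 0) (hb : 0 ≤ b)
    (hρ : ∀ u ∈ Icc a b, 0 ≤ ρ u) (hx : x ∉ Icc a b) :
    0 ≤ x * ∫ u in Icc a b, ρ u / (x - u) := by
  rw [← integral_const_mul]
  refine setIntegral_nonneg measurableSet_Icc fun u hu => ?_
  have : 0 ≤ x / (x - u) := by
    rw [mem_Icc, not_and_or, not_le, not_le] at hx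
    rcases hx with hx | hx
    · exact div_nonneg_of_nonpos (by linarith) (by linarith [hu.1])
    · exact div_nonneg (by linarith) (by linarith [hu.2])
  calc 0 ≤ ρ u * (x / (x - u)) := mul_nonneg (hρ u hu) this
    _ = x * (ρ u / (x - u)) := by ring

theorem mul_integral_ofReal_div_sub_ne_neg {a b s : ℝ} {ρ : ℝ → ℝ} {z : ℂ}
    (ha : a ≤ 0) (hb : 0 ≤ b) (hρ : ∀ u ∈ Icc a b, 0 ≤ ρ u) (hρint : IntegrableOn ρ (Icc a b))
    (hz : z ∉ (fun x : ℝ => (x : ℂ)) '' Icc a b) (hs : 0 < s) :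
    z * ∫ u in Icc a b, (ρ u : ℂ) / (z - u) ≠ -s := by
  intro h
  have him := im_eq_zero_of_mul_integral_ofReal_div_sub_eq_neg isCompact_Icc hρ hρint hz hs h
  obtain ⟨x, rfl⟩ : ∃ x : ℝ, (x : ℂ) = z := ⟨z.re, Complex.ext rfl (by simp [him])⟩
  have hx : x ∉ Icc a b := fun hmem => hz ⟨x, hmem, rfl⟩
  have hreal : ∫ u in Icc a b, (ρ u : ℂ) / (x - u) = ((∫ u in Icc a b, ρ u / (x - u) : ℝ) : ℂ) := by
    rw [← integral_complex_ofReal]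
    push_cast
    rfl
  rw [hreal] at h
  have : x * ∫ u in Icc a b, ρ u / (x - u) = -s := by exact_mod_cast h
  linarith [zero_le_mul_integral_div_sub ha hb hρ hx]

theorem stmt_1_general (ρ : ℝ → ℝ)
    (hρ : ∀ x ∈ Icc (-1 : ℝ) 1, 0 ≤ ρ x)
    (hρ1 : ∫ x in Icc (-1 : ℝ) 1, ρ x = 1)
    (S : ℂ → ℂ)
    (hS : ∀ z ∉ (fun x : ℝ => (x : ℂ)) '' Icc (-1 : ℝ) 1,
      S z = ∫ u in Icc (-1 : ℝ) 1, (ρ u : ℂ) / (z - (u : ℂ))) :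
    ∀ t : ℝ, 0 < t → t ≤ 1 →
      ∀ z ∉ (fun x : ℝ => (x : ℂ)) '' Icc (-1 : ℝ) 1,
        (t : ℂ) + (1 - (t : ℂ)) * z * S z ≠ 0 := by
  intro t ht0 ht1 z hz h
  obtain rfl | ht1 := ht1.eq_or_lt
  · simp at h
  have hρint : IntegrableOn ρ (Icc (-1 : ℝ) 1) := Integrable.of_integral_ne_zero (by simp [hρ1])
  refine mul_integral_ofReal_div_sub_ne_neg (by norm_num) (by norm_num) hρ hρint hz
    (div_pos ht0 (sub_pos.2 ht1)) ?_
  have h1t : (1 : ℂ) - t ≠ 0 := by exact_mod_cast (sub_pos.2 ht1).ne'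
  rw [← hS z hz]
  push_cast
  field_simp
  linear_combination h

/-- For a probability density `ρ` on `[-1,1]` with first moment `0`,
and `0 < t ≤ 1`, the equation `t + (1−t)·z·S_ρ(z) = 0` has no solution outside `[-1,1]`. -/
theorem stmt_1 (ρ : ℝ → ℝ)
    (hρ : ∀ x ∈ Icc (-1 : ℝ) 1, 0 ≤ ρ x)
    (hρ1 : ∫ x in Icc (-1 : ℝ) 1, ρ x = 1)
    (hc₁ : ∫ x in Icc (-1 : ℝ) 1, x * ρ x = 0)
    (S : ℂ → ℂ)
    (hS : ∀ z ∉ (fun x : ℝ => (x : ℂ)) '' Icc (-1 : ℝ) 1,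
      S z = ∫ u in Icc (-1 : ℝ) 1, (ρ u : ℂ) / (z - (u : ℂ))) :
    ∀ t : ℝ, 0 < t → t ≤ 1 →
      ∀ z ∉ (fun x : ℝ => (x : ℂ)) '' Icc (-1 : ℝ) 1,
        (t : ℂ) + (1 - (t : ℂ)) * z * S z ≠ 0 :=
  stmt_1_general ρ hρ hρ1 S hS
end

section
/- Let ρ be a probability density on I = [−1,1] with first moment c₁ ∈ (−1,1), and 0 < t ≤ 1. Then the equation t + (1−t)(z − c₁)S_ρ(z) = 0 has no non-real solution z ∈ ℂ \ ℝ. (Key step: writing z = x + iy with y ≠ 0, the imaginary and real parts force ∫_I [(1−t)(x−c₁)² + y² + t(x−u)²] ρ(u)/((x−u)²+y²) du = 0, which is impossible since the integrand is positive.) -/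
/-!
Taking imaginary parts after multiplying the equation by `conj (z - c₁)` gives
`t · Im z = (1 - t) |z - c₁|² Im S_ρ(z)`. Since `ρ ≥ 0`, the Stieltjes transform maps each
half-plane into the opposite one, `Im z · Im S_ρ(z) ≤ 0`, whereas `t (Im z)² > 0`.
-/

open MeasureTheory Set

namespace Complex

theorem im_mul_im_ofReal_div_sub_ofReal_nonpos (z : ℂ) {a : ℝ} (ha : 0 ≤ a) (u : ℝ) :
    z.im * ((a : ℂ) / (z - u)).im ≤ 0 := by
  have : z.im * ((a : ℂ) / (z - u)).im = -(a * z.im ^ 2 / normSq (z - u)) := by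
    simp only [div_im, ofReal_re, ofReal_im, sub_im, sub_re]
    ring
  rw [this, neg_nonpos]
  exact div_nonneg (mul_nonneg ha (sq_nonneg _)) (normSq_nonneg _)

theorem im_mul_im_integral_div_sub_nonpos {μ : Measure ℝ} {ρ : ℝ → ℝ} (hρ : 0 ≤ᵐ[μ] ρ)
    (z : ℂ) : z.im * (∫ u, (ρ u : ℂ) / (z - u) ∂μ).im ≤ 0 := by
  by_cases hf : Integrable (fun u => (ρ u : ℂ) / (z - u)) μ
  · have him : (∫ u, (ρ u : ℂ) / (z - u) ∂μ).im = ∫ u, ((ρ u : ℂ) / (z - u)).im ∂μ :=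
      (integral_im hf).symm
    rw [him, ← integral_const_mul]
    refine integral_nonpos_of_ae (hρ.mono fun u hu => ?_)
    exact im_mul_im_ofReal_div_sub_ofReal_nonpos z hu u
  · simp [integral_undef hf]

theorem ofReal_add_one_sub_mul_sub_mul_ne_zero {z w : ℂ} (hz : z.im ≠ 0)
    (hw : z.im * w.im ≤ 0) (c : ℝ) {t : ℝ} (ht : 0 < t) (ht1 : t ≤ 1) :
    (t : ℂ) + (1 - t) * (z - c) * w ≠ 0 := by
  intro h
  have him : (starRingEnd ℂ (z - c) * ((t : ℂ) + (1 - t) * (z - c) * w)).im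
      = -t * z.im + (1 - t) * normSq (z - c) * w.im := by
    simp only [mul_im, mul_re, add_im, add_re, sub_im, sub_re, conj_re, conj_im, ofReal_re,
      ofReal_im, one_re, one_im, normSq_apply]
    ring
  rw [h, mul_zero, zero_im] at him
  have hbalance : t * z.im ^ 2 = (1 - t) * normSq (z - c) * (z.im * w.im) := by
    linear_combination z.im * him
  have hA : 0 ≤ (1 - t) * normSq (z - c) := mul_nonneg (by linarith) (normSq_nonneg _)
  have : 0 < t * z.im ^ 2 := by positivity
  linarith [mul_nonpos_of_nonneg_of_nonpos hA hw]

end Complex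

theorem stmt_2_general (ρ : ℝ → ℝ) (c₁ t : ℝ)
    (hρ : ∀ x ∈ Icc (-1 : ℝ) 1, 0 ≤ ρ x)
    (ht : 0 < t) (ht1 : t ≤ 1)
    (S : ℂ → ℂ)
    (hS : ∀ z : ℂ, z.im ≠ 0 →
      S z = ∫ u in Icc (-1 : ℝ) 1, (ρ u : ℂ) / (z - (u : ℂ))) :
    ∀ z : ℂ, z.im ≠ 0 →
      (t : ℂ) + (1 - (t : ℂ)) * (z - (c₁ : ℂ)) * S z ≠ 0 := by
  intro z hz
  have hSz : z.im * (S z).im ≤ 0 := by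
    rw [hS z hz]
    exact Complex.im_mul_im_integral_div_sub_nonpos
      (ae_restrict_of_forall_mem measurableSet_Icc hρ) z
  exact Complex.ofReal_add_one_sub_mul_sub_mul_ne_zero hz hSz c₁ ht ht1

/-- For a probability density `ρ` on `[-1,1]` with first moment
`c₁ ∈ (−1,1)` and `0 < t ≤ 1`, the equation `t + (1−t)(z−c₁)S_ρ(z) = 0` has
no non-real solution. -/
theorem stmt_2 (ρ : ℝ → ℝ) (c₁ t : ℝ)
    (hρ : ∀ x ∈ Icc (-1 : ℝ) 1, 0 ≤ ρ x)
    (hρ1 : ∫ x in Icc (-1 : ℝ) 1, ρ x = 1)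
    (hc₁ : c₁ = ∫ x in Icc (-1 : ℝ) 1, x * ρ x)
    (hc₁mem : c₁ ∈ Ioo (-1 : ℝ) 1)
    (ht : 0 < t) (ht1 : t ≤ 1)
    (S : ℂ → ℂ)
    (hS : ∀ z : ℂ, z.im ≠ 0 →
      S z = ∫ u in Icc (-1 : ℝ) 1, (ρ u : ℂ) / (z - (u : ℂ))) :
    ∀ z : ℂ, z.im ≠ 0 →
      (t : ℂ) + (1 - (t : ℂ)) * (z - (c₁ : ℂ)) * S z ≠ 0 :=
  stmt_2_general ρ c₁ t hρ ht ht1 S hS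
end

section
/- Let ρ(x) = (2/π)√(1−x²) be the Chebyshev density of the second kind on (−1,1). Then its first moment is 0, its reducer is φ(x) = lim_{ε→0⁺} 2∫_{−1}^{1} (x−u)ρ(u)/((x−u)²+ε²) du = 4x, and its secondary measure has density μ(x) = ρ(x)/(φ(x)²/4 + π²ρ(x)²) = ρ(x)/4. -/
/-!
Write `ρ(u) = ρ(x) + (x - u) p(u)`. Then the regularised reducer integrand splits as
`ρ(x) (x-u)/((x-u)²+ε²) + (x-u)²/((x-u)²+ε²) p(u)`. The first part integrates to an explicit
logarithm, and the second converges to `∫ p` by dominated convergence, so no principal value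
has to be handled by hand. For the semicircle, `p(u) = (2/π)(x+u)/(√(1-u²)+√(1-x²))` is
continuous on `[-1, 1]`, and it has the elementary primitive
`x arcsin u - √(1-u²) + √(1-x²) log(1 - xu + √(1-x²)√(1-u²))`. Its logarithmic boundary terms
cancel the first part, which leaves `φ(x) = 4x`.
-/

open MeasureTheory Set Filter Real Topology

theorem intervalIntegral.integral_eq_zero_of_odd {f : ℝ → ℝ} (hf : ∀ x, f (-x) = -f x) (a : ℝ) :
    ∫ x in -a..a, f x = 0 := by
  suffices h : ∫ x in -a..a, f x = -∫ x in -a..a, f x by linarith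
  calc ∫ x in -a..a, f x = ∫ x in -a..a, f (-x) := by
        rw [intervalIntegral.integral_comp_neg, neg_neg]
    _ = -∫ x in -a..a, f x := by simp_rw [hf, intervalIntegral.integral_neg]

section PrincipalValue

variable {a b x : ℝ}

theorem integral_sub_div_sq_add_sq {ε : ℝ} (hε : ε ≠ 0) :
    ∫ u in a..b, (x - u) / ((x - u) ^ 2 + ε ^ 2)
      = (log ((x - a) ^ 2 + ε ^ 2) - log ((x - b) ^ 2 + ε ^ 2)) / 2 := by
  have hpos : ∀ u, (x - u) ^ 2 + ε ^ 2 ≠ 0 := fun u => by positivity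
  have hderiv : ∀ u, HasDerivAt (fun u => -log ((x - u) ^ 2 + ε ^ 2) / 2)
      ((x - u) / ((x - u) ^ 2 + ε ^ 2)) u := by
    intro u
    have hsq : HasDerivAt (fun u => (x - u) ^ 2 + ε ^ 2) (-(2 * (x - u))) u := by
      simpa using (((hasDerivAt_id u).const_sub x).pow 2).add_const (ε ^ 2)
    refine ((hsq.log (hpos u)).neg.div_const 2).congr_deriv ?_
    ring
  rw [intervalIntegral.integral_eq_sub_of_hasDerivAt (fun u _ => hderiv u)
    (by apply Continuous.intervalIntegrable; fun_prop (disch := exact hpos _))]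
  ring

theorem tendsto_integral_sub_div_sq_add_sq (ha : x ≠ a) (hb : x ≠ b) :
    Tendsto (fun ε => ∫ u in a..b, (x - u) / ((x - u) ^ 2 + ε ^ 2)) (𝓝[≠] 0)
      (𝓝 (log |x - a| - log |x - b|)) := by
  have hlog : ∀ c : ℝ, c ≠ 0 →
      Tendsto (fun ε : ℝ => log (c ^ 2 + ε ^ 2)) (𝓝 0) (𝓝 (2 * log |c|)) := by
    intro c hc
    have := ((continuous_const.add (continuous_pow 2)).tendsto 0).log
      (by positivity : c ^ 2 + (0 : ℝ) ^ 2 ≠ 0)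
    simpa [log_pow, log_abs] using this
  refine Tendsto.congr' (eventually_nhdsWithin_of_forall fun ε hε =>
    (integral_sub_div_sq_add_sq hε).symm) ?_
  convert ((hlog _ (sub_ne_zero.2 ha)).sub (hlog _ (sub_ne_zero.2 hb))).div_const 2
    |>.mono_left nhdsWithin_le_nhds using 2
  ring

theorem tendsto_integral_sq_div_sq_add_sq_mul {p : ℝ → ℝ} (hp : IntervalIntegrable p volume a b) :
    Tendsto (fun ε => ∫ u in a..b, (x - u) ^ 2 / ((x - u) ^ 2 + ε ^ 2) * p u) (𝓝 0)
      (𝓝 (∫ u in a..b, p u)) := by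
  refine intervalIntegral.tendsto_integral_filter_of_dominated_convergence (fun u => ‖p u‖)
    (.of_forall fun ε => ?_) (.of_forall fun ε => .of_forall fun u _ => ?_) hp.norm ?_
  · exact (by fun_prop : Measurable fun u => (x - u) ^ 2 / ((x - u) ^ 2 + ε ^ 2))
      |>.aestronglyMeasurable.mul hp.def'.aestronglyMeasurable
  · rw [norm_mul, Real.norm_of_nonneg (by positivity)]
    exact mul_le_of_le_one_left (norm_nonneg _)
      (div_le_one_of_le₀ (le_add_of_nonneg_right (by positivity)) (by positivity))
  · filter_upwards [measure_eq_zero_iff_ae_notMem.1 (measure_singleton x)] with u hu _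
    have hne : (x - u) ^ 2 ≠ 0 := pow_ne_zero 2 (sub_ne_zero.2 (Ne.symm hu))
    have hcont : ContinuousAt (fun ε : ℝ => (x - u) ^ 2 / ((x - u) ^ 2 + ε ^ 2) * p u) 0 :=
      (continuousAt_const.div (continuousAt_const.add (continuousAt_id.pow 2))
        (by simpa using hne)).mul continuousAt_const
    simpa [hne] using hcont.tendsto

theorem tendsto_integral_sub_mul_div_sq_add_sq {f p : ℝ → ℝ} (ha : x ≠ a) (hb : x ≠ b)
    (hf : ∀ u ∈ uIcc a b, f u = f x + (x - u) * p u) (hp : IntervalIntegrable p volume a b) :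
    Tendsto (fun ε => ∫ u in a..b, (x - u) * f u / ((x - u) ^ 2 + ε ^ 2)) (𝓝[≠] 0)
      (𝓝 (f x * (log |x - a| - log |x - b|) + ∫ u in a..b, p u)) := by
  refine Tendsto.congr' (eventually_nhdsWithin_of_forall fun ε (hε : ε ≠ 0) => ?_)
    (((tendsto_integral_sub_div_sq_add_sq ha hb).const_mul (f x)).add
      ((tendsto_integral_sq_div_sq_add_sq_mul (x := x) hp).mono_left nhdsWithin_le_nhds))
  have hpos : ∀ u, (x - u) ^ 2 + ε ^ 2 ≠ 0 := fun u => by positivity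
  rw [← intervalIntegral.integral_const_mul, ← intervalIntegral.integral_add]
  · refine intervalIntegral.integral_congr fun u hu => ?_
    rw [hf u hu]
    ring
  · exact (Continuous.intervalIntegrable (by fun_prop (disch := exact hpos _)) _ _).const_mul _
  · exact hp.continuousOn_mul (Continuous.continuousOn (by fun_prop (disch := exact hpos _)))

end PrincipalValue

section Semicircle

variable {x u : ℝ}

theorem sqrt_one_sub_sq_eq_add_mul (hx : x ∈ Ioo (-1) 1) (hu : u ∈ Icc (-1) 1) :
    √(1 - u ^ 2) = √(1 - x ^ 2) + (x - u) * ((x + u) / (√(1 - u ^ 2) + √(1 - x ^ 2))) := by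
  have hc : 0 < √(1 - x ^ 2) := sqrt_pos.2 (by nlinarith [hx.1, hx.2])
  have hc2 : √(1 - x ^ 2) ^ 2 = 1 - x ^ 2 := sq_sqrt (by nlinarith [hx.1, hx.2])
  have hs2 : √(1 - u ^ 2) ^ 2 = 1 - u ^ 2 := sq_sqrt (by nlinarith [hu.1, hu.2])
  have hsum : √(1 - u ^ 2) + √(1 - x ^ 2) ≠ 0 := by positivity
  field_simp
  linear_combination hs2 - hc2

theorem hasDerivAt_sqrt_one_sub_sq (hu : u ∈ Ioo (-1) 1) :
    HasDerivAt (fun v => √(1 - v ^ 2)) (-u / √(1 - u ^ 2)) u := by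
  have hpos : 0 < 1 - u ^ 2 := by nlinarith [hu.1, hu.2]
  have h := ((hasDerivAt_pow 2 u).const_sub 1).sqrt hpos.ne'
  refine h.congr_deriv ?_
  have := (sqrt_pos.2 hpos).ne'
  field_simp
  ring

theorem one_sub_mul_add_sqrt_mul_sqrt_pos (hx : x ∈ Ioo (-1) 1) (hu : u ∈ Icc (-1) 1) :
    0 < 1 - x * u + √(1 - x ^ 2) * √(1 - u ^ 2) := by
  have hxu : x * u < 1 := by
    rcases le_total 0 u with h | h <;> nlinarith [hx.1, hx.2, hu.1, hu.2]
  have : 0 ≤ √(1 - x ^ 2) * √(1 - u ^ 2) := by positivity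
  linarith

theorem continuous_add_div_sqrt_one_sub_sq_add_sqrt (hx : x ∈ Ioo (-1) 1) :
    Continuous fun u => (x + u) / (√(1 - u ^ 2) + √(1 - x ^ 2)) :=
  have hc : 0 < √(1 - x ^ 2) := sqrt_pos.2 (by nlinarith [hx.1, hx.2])
  (continuous_const.add continuous_id).div (by fun_prop)
    fun _ => (add_pos_of_nonneg_of_pos (sqrt_nonneg _) hc).ne'

theorem hasDerivAt_mul_arcsin_sub_sqrt_add_mul_log (hx : x ∈ Ioo (-1) 1) (hu : u ∈ Ioo (-1) 1) :
    HasDerivAt (fun v => x * arcsin v - √(1 - v ^ 2)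
        + √(1 - x ^ 2) * log (1 - x * v + √(1 - x ^ 2) * √(1 - v ^ 2)))
      ((x + u) / (√(1 - u ^ 2) + √(1 - x ^ 2))) u := by
  set c := √(1 - x ^ 2)
  have hc : 0 < c := sqrt_pos.2 (by nlinarith [hx.1, hx.2])
  have hc2 : c ^ 2 = 1 - x ^ 2 := sq_sqrt (by nlinarith [hx.1, hx.2])
  have hs : 0 < √(1 - u ^ 2) := sqrt_pos.2 (by nlinarith [hu.1, hu.2])
  have hs2 : √(1 - u ^ 2) ^ 2 = 1 - u ^ 2 := sq_sqrt (by nlinarith [hu.1, hu.2])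
  have hB : 0 < 1 - x * u + c * √(1 - u ^ 2) :=
    one_sub_mul_add_sqrt_mul_sqrt_pos hx (Ioo_subset_Icc_self hu)
  have hS := hasDerivAt_sqrt_one_sub_sq hu
  have hB' : HasDerivAt (fun v => 1 - x * v + c * √(1 - v ^ 2))
      (-x + c * (-u / √(1 - u ^ 2))) u :=
    ((((hasDerivAt_id u).const_mul x).const_sub 1).add (hS.const_mul c)).congr_deriv (by ring)
  have h := (((hasDerivAt_arcsin hu.1.ne' hu.2.ne).const_mul x).sub hS).add
    ((hB'.log hB.ne').const_mul c)
  refine h.congr_deriv ?_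
  have : 1 - x * u + √(1 - u ^ 2) * c ≠ 0 := by linarith
  field_simp
  linear_combination (-x * c) * hs2 - u * c * hc2

theorem integral_add_div_sqrt_one_sub_sq_add_sqrt (hx : x ∈ Ioo (-1) 1) :
    ∫ u in (-1)..1, (x + u) / (√(1 - u ^ 2) + √(1 - x ^ 2))
      = π * x - √(1 - x ^ 2) * (log (1 + x) - log (1 - x)) := by
  have hB : ∀ v ∈ Icc (-1 : ℝ) 1, 1 - x * v + √(1 - x ^ 2) * √(1 - v ^ 2) ≠ 0 :=
    fun v hv => (one_sub_mul_add_sqrt_mul_sqrt_pos hx hv).ne'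
  rw [intervalIntegral.integral_eq_sub_of_hasDerivAt_of_le (by norm_num) ?cont
    (fun u hu => hasDerivAt_mul_arcsin_sub_sqrt_add_mul_log hx hu) ?int]
  case cont =>
    exact ((continuous_const.mul continuous_arcsin).sub (by fun_prop)).continuousOn.add
      (continuousOn_const.mul ((Continuous.continuousOn (by fun_prop)).log hB))
  case int =>
    exact (continuous_add_div_sqrt_one_sub_sq_add_sqrt hx).intervalIntegrable _ _
  norm_num [arcsin_one, arcsin_neg_one]
  ring

theorem tendsto_semicircle_reducer (hx : x ∈ Ioo (-1) 1) :
    Tendsto (fun ε => ∫ u in (-1)..1, (x - u) * (2 / π * √(1 - u ^ 2)) / ((x - u) ^ 2 + ε ^ 2))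
      (𝓝[≠] 0) (𝓝 (2 * x)) := by
  have hlim := tendsto_integral_sub_mul_div_sq_add_sq (f := fun u => 2 / π * √(1 - u ^ 2))
    (p := fun u => 2 / π * ((x + u) / (√(1 - u ^ 2) + √(1 - x ^ 2)))) hx.1.ne' hx.2.ne
    (fun u hu => by
      rw [uIcc_of_le (by norm_num)] at hu
      linear_combination 2 / π * sqrt_one_sub_sq_eq_add_mul hx hu)
    (((continuous_add_div_sqrt_one_sub_sq_add_sqrt hx).const_mul _).intervalIntegrable _ _)
  convert hlim using 2
  have h1 : |x - -1| = 1 + x := by rw [abs_of_pos] <;> linarith [hx.1]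
  have h2 : |x - 1| = 1 - x := by rw [abs_of_neg] <;> linarith [hx.2]
  rw [intervalIntegral.integral_const_mul, integral_add_div_sqrt_one_sub_sq_add_sqrt hx, h1, h2]
  field_simp
  ring

end Semicircle

/-- For the Chebyshev density of the second kind
`ρ(x) = (2/π)√(1−x²)` on `(−1,1)`: the first moment is `0`, the reducer is
`φ(x) = 4x`, and the secondary density `μ(x) = ρ(x)/(φ²/4 + π²ρ²) = ρ(x)/4`. -/
theorem stmt_6 :
    (∫ x in Ioo (-1 : ℝ) 1, x * (2 / Real.pi * Real.sqrt (1 - x ^ 2)) = 0) ∧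
    (∀ x ∈ Ioo (-1 : ℝ) 1,
      Tendsto (fun ε : ℝ =>
          2 * ∫ u in Ioo (-1 : ℝ) 1,
            (x - u) * (2 / Real.pi * Real.sqrt (1 - u ^ 2)) / ((x - u) ^ 2 + ε ^ 2))
        (nhdsWithin 0 (Ioi 0)) (nhds (4 * x))) ∧
    (∀ x ∈ Ioo (-1 : ℝ) 1,
      (2 / Real.pi * Real.sqrt (1 - x ^ 2)) /
          ((4 * x) ^ 2 / 4 + Real.pi ^ 2 * (2 / Real.pi * Real.sqrt (1 - x ^ 2)) ^ 2)
        = (2 / Real.pi * Real.sqrt (1 - x ^ 2)) / 4) := by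
  have hIoo : ∀ g : ℝ → ℝ, ∫ u in Ioo (-1 : ℝ) 1, g u = ∫ u in (-1)..1, g u := fun g => by
    rw [intervalIntegral.integral_of_le (by norm_num), integral_Ioc_eq_integral_Ioo]
  refine ⟨?_, fun x hx => ?_, fun x hx => ?_⟩
  · rw [hIoo]
    exact intervalIntegral.integral_eq_zero_of_odd (fun u => by rw [neg_sq]; ring) 1
  · simp_rw [hIoo]
    have h := ((tendsto_semicircle_reducer hx).const_mul 2).mono_left
      (nhdsWithin_mono 0 fun ε (hε : ε ∈ Ioi 0) => hε.ne')
    rwa [show 2 * (2 * x) = 4 * x by ring] at h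
  · have hs2 : √(1 - x ^ 2) ^ 2 = 1 - x ^ 2 := sq_sqrt (by nlinarith [hx.1, hx.2])
    have hden : (4 * x) ^ 2 / 4 + π ^ 2 * (2 / π * √(1 - x ^ 2)) ^ 2 = 4 := by
      field_simp
      linear_combination 4 * hs2
    rw [hden]
end

section
/- The reducer of the density ρ(x) = 2x on (0,1) is φ(x) = −4x·ln((1−x)/x) − 4 for x ∈ (0,1). -/
/-!
For `ε > 0` the regularized integral has an elementary closed form in logarithms and arctangents.
As `ε → 0⁺` the arctangent terms are `O(ε)`, and since `x` stays away from the endpoints the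
logarithmic terms converge to their values at `ε = 0`, namely `log x` and `log (1 - x)`.
-/

open MeasureTheory Set Filter Topology Real

/- From `(x - u) * u / ((x - u) ^ 2 + ε ^ 2) = x * (x - u) / ((x - u) ^ 2 + ε ^ 2) - 1
  + ε ^ 2 / ((x - u) ^ 2 + ε ^ 2)`. -/
noncomputable def kernelPrimitive (x ε u : ℝ) : ℝ :=
  -(x / 2) * log ((x - u) ^ 2 + ε ^ 2) - u - ε * arctan ((x - u) / ε)

theorem hasDerivAt_kernelPrimitive {ε : ℝ} (hε : ε ≠ 0) (x u : ℝ) :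
    HasDerivAt (kernelPrimitive x ε) ((x - u) * u / ((x - u) ^ 2 + ε ^ 2)) u := by
  have hpos : (x - u) ^ 2 + ε ^ 2 ≠ 0 := by positivity
  have hsub : HasDerivAt (fun y : ℝ => x - y) (-1) u := (hasDerivAt_id u).const_sub x
  have hlog := (((hsub.pow 2).add_const (ε ^ 2)).log hpos).const_mul (-(x / 2))
  have harctan := ((hsub.div_const ε).arctan).const_mul ε
  refine ((hlog.sub (hasDerivAt_id u)).sub harctan).congr_deriv ?_
  simp only [Pi.pow_apply]
  field_simp
  ring

theorem integral_kernel_mul_id {ε : ℝ} (hε : ε ≠ 0) (x a b : ℝ) :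
    ∫ u in a..b, (x - u) * u / ((x - u) ^ 2 + ε ^ 2)
      = kernelPrimitive x ε b - kernelPrimitive x ε a := by
  have hcont : Continuous fun u : ℝ => (x - u) * u / ((x - u) ^ 2 + ε ^ 2) :=
    by fun_prop (disch := intro u; positivity)
  exact intervalIntegral.integral_eq_sub_of_hasDerivAt
    (fun u _ => hasDerivAt_kernelPrimitive hε x u) (hcont.intervalIntegrable a b)

theorem tendsto_mul_arctan_div (c : ℝ) :
    Tendsto (fun ε : ℝ => ε * arctan (c / ε)) (𝓝 0) (𝓝 0) :=
  tendsto_id.zero_mul_isBoundedUnder_le <| isBoundedUnder_of ⟨π / 2, fun _ =>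
    abs_le.mpr ⟨(neg_pi_div_two_lt_arctan _).le, (arctan_lt_pi_div_two _).le⟩⟩

theorem tendsto_kernelPrimitive {x u : ℝ} (hu : x ≠ u) :
    Tendsto (fun ε => kernelPrimitive x ε u) (𝓝 0) (𝓝 (-x * log |x - u| - u)) := by
  have hlog : Tendsto (fun ε : ℝ => log ((x - u) ^ 2 + ε ^ 2)) (𝓝 0)
      (𝓝 (2 * log |x - u|)) := by
    have hne : (x - u) ^ 2 + (0 : ℝ) ^ 2 ≠ 0 := by simpa [sub_eq_zero] using hu
    have := ((continuous_const.add (continuous_pow 2)).continuousAt (x := 0)).log hne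
    simpa [log_abs, log_pow] using this.tendsto
  have := ((hlog.const_mul (-(x / 2))).sub_const u).sub (tendsto_mul_arctan_div (x - u))
  rwa [sub_zero, ← mul_assoc, neg_mul, div_mul_cancel₀ x two_ne_zero] at this

theorem tendsto_integral_kernel_mul_id {x a b : ℝ} (ha : x ≠ a) (hb : x ≠ b) :
    Tendsto (fun ε => ∫ u in a..b, (x - u) * u / ((x - u) ^ 2 + ε ^ 2)) (𝓝[≠] 0)
      (𝓝 (x * (log |x - a| - log |x - b|) - (b - a))) := by
  have := ((tendsto_kernelPrimitive hb).sub (tendsto_kernelPrimitive ha)).mono_left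
    (nhdsWithin_le_nhds (s := {0}ᶜ))
  refine (this.congr' ?_).trans_eq (by ring_nf)
  filter_upwards [self_mem_nhdsWithin] with ε hε
  exact (integral_kernel_mul_id hε x a b).symm

/-- The reducer of the density `ρ(x) = 2x` on `(0,1)` is
`φ(x) = −4x·ln((1−x)/x) − 4`. -/
theorem stmt_8 :
    ∀ x ∈ Ioo (0 : ℝ) 1,
      Tendsto (fun ε : ℝ =>
          2 * ∫ u in Ioo (0 : ℝ) 1, (x - u) * (2 * u) / ((x - u) ^ 2 + ε ^ 2))
        (nhdsWithin 0 (Ioi 0)) (nhds (-4 * x * Real.log ((1 - x) / x) - 4)) := by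
  rintro x ⟨hx0, hx1⟩
  have hlimit := ((tendsto_integral_kernel_mul_id hx0.ne' hx1.ne).const_mul 4).mono_left
    (nhdsWithin_mono _ fun ε (hε : 0 < ε) => hε.ne')
  have hvalue : 4 * (x * (log |x - 0| - log |x - 1|) - (1 - 0))
      = -4 * x * log ((1 - x) / x) - 4 := by
    rw [sub_zero, abs_of_pos hx0, abs_sub_comm, abs_of_pos (sub_pos.2 hx1),
      log_div (sub_pos.2 hx1).ne' hx0.ne']
    ring
  rw [← hvalue]
  refine hlimit.congr fun ε => ?_
  have hdouble : ∫ u in Ioo (0 : ℝ) 1, (x - u) * (2 * u) / ((x - u) ^ 2 + ε ^ 2)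
      = 2 * ∫ u in (0 : ℝ)..1, (x - u) * u / ((x - u) ^ 2 + ε ^ 2) := by
    rw [intervalIntegral.integral_of_le zero_le_one, integral_Ioc_eq_integral_Ioo,
      ← integral_const_mul]
    congr 1 with u
    ring
  rw [hdouble]
  ring
end

section
/- Let T(f)(x) = (2/π)∫_{−1}^{1}(f(u)−f(x))√(1−u²)/(u−x) du and T₂(g)(x) = (1/π)∫_{−1}^{1}(g(u)−g(x))/((u−x)√(1−u²)) du be the secondary operators for the Chebyshev weights of second and first kind. Then for every polynomial f with ∫_{−1}^{1} f(x)·(2/π)√(1−x²) dx = 0, applying V(h)(x) = h(x) − (x/2)T(h)(x) after W(g)(x) = g(x) + x·T₂(g)(x) recovers f: V(W(f)) = f. Equivalently, the solution of f(x) − (x/π)∫_{−1}^{1}(f(u)−f(x))√(1−u²)/(u−x) du = g(x) is f(x) = g(x) + (x/π)∫_{−1}^{1}(g(u)−g(x))/((u−x)√(1−u²)) du. -/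
/-!
For a linear functional `φ` on polynomials, the secondary transform `p ↦ (x ↦ φ((p - p(x))/(X - x)))`
satisfies `S(X p)(x) = x S(p)(x) + φ(p)`. So along any sequence obeying the Chebyshev recurrence
`P_{n+2} = 2X P_{n+1} - P_n` whose terms of positive index are killed by `φ`, the transforms follow
the same recurrence and are multiples of `U_{n-1}`. Each Chebyshev weight kills its own orthogonal
polynomials of positive degree, which gives `T₂ T_n = U_{n-1}` and `T U_n = 2 U_{n-1}`. Since
`T_n + x U_{n-1} = U_n`, we get `W(T_n) = U_n` and `V(U_n) = U_n - x U_{n-1} = T_n`, and the `T_n` span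
`ℝ[X]`.
-/

open MeasureTheory Set Polynomial

namespace Polynomial

section DivDiff

variable {R : Type*} [CommRing R]

theorem X_sub_C_mul_divByMonic_X_sub_C (x : R) (p : R[X]) :
    (X - C x) * (p /ₘ (X - C x)) = p - C (p.eval x) := by
  rw [eq_sub_iff_add_eq, ← modByMonic_X_sub_C_eq_C_eval, add_comm, modByMonic_add_div]

theorem divByMonic_X_sub_C_eq_of_mul {x : R} {p q : R[X]}
    (h : (X - C x) * q = p - C (p.eval x)) : p /ₘ (X - C x) = q :=
  (monic_X_sub_C x).isRegular.left <| (X_sub_C_mul_divByMonic_X_sub_C x p).trans h.symm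

noncomputable def divDiff (x : R) : R[X] →ₗ[R] R[X] where
  toFun p := p /ₘ (X - C x)
  map_add' p q := divByMonic_X_sub_C_eq_of_mul <| by
    rw [mul_add, X_sub_C_mul_divByMonic_X_sub_C, X_sub_C_mul_divByMonic_X_sub_C, eval_add, C_add]
    ring
  map_smul' c p := divByMonic_X_sub_C_eq_of_mul <| by
    rw [RingHom.id_apply, mul_smul_comm, X_sub_C_mul_divByMonic_X_sub_C, eval_smul, smul_sub,
      smul_eq_mul, C_mul, smul_eq_C_mul, smul_eq_C_mul]

theorem X_sub_C_mul_divDiff (x : R) (p : R[X]) : (X - C x) * divDiff x p = p - C (p.eval x) :=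
  X_sub_C_mul_divByMonic_X_sub_C x p

theorem divDiff_eq_of_mul {x : R} {p q : R[X]} (h : (X - C x) * q = p - C (p.eval x)) :
    divDiff x p = q :=
  divByMonic_X_sub_C_eq_of_mul h

theorem sub_mul_eval_divDiff (x u : R) (p : R[X]) :
    (u - x) * (divDiff x p).eval u = p.eval u - p.eval x := by
  simpa using congrArg (eval u) (X_sub_C_mul_divDiff x p)

theorem divDiff_C (x a : R) : divDiff x (C a) = 0 :=
  divDiff_eq_of_mul <| by simp

theorem divDiff_X_mul (x : R) (p : R[X]) : divDiff x (X * p) = C x * divDiff x p + p :=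
  divDiff_eq_of_mul <| by
    rw [mul_add, mul_left_comm, X_sub_C_mul_divDiff, eval_mul, eval_X, C_mul]
    ring

end DivDiff

section Secondary

variable {R : Type*} [CommRing R] (φ : R[X] →ₗ[R] R)

noncomputable def secondary (x : R) : R[X] →ₗ[R] R := φ ∘ₗ divDiff x

variable {φ}

theorem secondary_apply (x : R) (p : R[X]) : secondary φ x p = φ (divDiff x p) := rfl

theorem secondary_C (x a : R) : secondary φ x (C a) = 0 := by
  rw [secondary_apply, divDiff_C, map_zero]

theorem secondary_X_mul (x : R) (p : R[X]) :
    secondary φ x (X * p) = x * secondary φ x p + φ p := by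
  rw [secondary_apply, divDiff_X_mul, map_add, C_mul', map_smul, smul_eq_mul, secondary_apply]

theorem secondary_X (x : R) : secondary φ x X = φ 1 := by
  rw [← mul_one X, secondary_X_mul, ← C_1, secondary_C, mul_zero, zero_add]

theorem secondary_two_mul_X_mul_sub (x : R) (p q : R[X]) :
    secondary φ x (2 * X * p - q) = 2 * x * secondary φ x p - secondary φ x q + 2 * φ p := by
  rw [map_sub, mul_assoc, ← C_ofNat, C_mul', map_smul, smul_eq_mul, secondary_X_mul]
  ring

theorem secondary_eq_mul_eval_chebyshev_U {P : ℕ → R[X]} {a : R} (hP₀ : P 0 = C a)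
    (hP : ∀ n, P (n + 2) = 2 * X * P (n + 1) - P n) (hφ : ∀ n, φ (P (n + 1)) = 0)
    (x : R) (n : ℕ) :
    secondary φ x (P n) = secondary φ x (P 1) * (Chebyshev.U R (n - 1)).eval x := by
  induction n using Nat.twoStepInduction with
  | zero => simp [hP₀, secondary_C]
  | one => simp
  | more n ih₀ ih₁ =>
    push_cast at ih₁ ⊢
    rw [add_sub_cancel_right] at ih₁
    rw [hP, secondary_two_mul_X_mul_sub, ih₀, ih₁, hφ, show (n + 2 - 1 : ℤ) = n - 1 + 2 by ring,
      Chebyshev.U_add_two, sub_add_cancel]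
    simp only [eval_sub, eval_mul, eval_X, eval_ofNat]
    ring

end Secondary

namespace Chebyshev

open Real

noncomputable def integralT : ℝ[X] →ₗ[ℝ] ℝ where
  toFun p := ∫ u, p.eval u ∂measureT
  map_add' p q := by
    simp only [eval_add]
    exact integral_add (integrable_measureT (by fun_prop)) (integrable_measureT (by fun_prop))
  map_smul' c p := by
    simp only [eval_smul, smul_eq_mul, RingHom.id_apply]
    exact integral_const_mul c _

/-- `p ↦ ∫ p(u) √(1 - u²) du`, written against `measureT` via `√(1 - u²) = (1 - u²) / √(1 - u²)`. -/
noncomputable def integralU : ℝ[X] →ₗ[ℝ] ℝ := integralT ∘ₗ LinearMap.mulLeft ℝ (1 - X ^ 2)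

theorem integralT_apply (p : ℝ[X]) : integralT p = ∫ u, p.eval u ∂measureT := rfl

theorem integralU_apply (p : ℝ[X]) : integralU p = integralT ((1 - X ^ 2) * p) := rfl

theorem integralT_T_of_ne_zero {n : ℤ} (hn : n ≠ 0) : integralT (T ℝ n) = 0 :=
  integral_eval_T_real_measureT_of_ne_zero hn

theorem integralT_one : integralT 1 = π := by
  rw [← T_zero ℝ]
  exact integral_eval_T_real_measureT_zero

theorem two_mul_one_sub_X_sq_mul_U (R : Type*) [CommRing R] (n : ℤ) :
    2 * ((1 - X ^ 2) * U R n) = T R n - T R (n + 2) := by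
  linear_combination 2 * one_sub_X_sq_mul_U_eq_pol_in_T R n - T_add_two R n

theorem two_mul_integralU_U (n : ℤ) :
    2 * integralU (U ℝ n) = integralT (T ℝ n) - integralT (T ℝ (n + 2)) := by
  rw [integralU_apply, ← map_sub, ← two_mul_one_sub_X_sq_mul_U, two_mul, two_mul, map_add]

theorem integralU_one : integralU 1 = π / 2 := by
  have h := two_mul_integralU_U 0
  rw [zero_add, integralT_T_of_ne_zero two_ne_zero, U_zero, T_zero, integralT_one] at h
  linarith

theorem integralU_U_of_ne_zero {n : ℕ} (hn : n ≠ 0) : integralU (U ℝ n) = 0 := by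
  have h := two_mul_integralU_U n
  rw [integralT_T_of_ne_zero (by omega), integralT_T_of_ne_zero (by omega)] at h
  linarith

theorem secondary_integralT_T (x : ℝ) (n : ℕ) :
    secondary integralT x (T ℝ n) = π * (U ℝ (n - 1)).eval x := by
  have hT (n : ℕ) : T ℝ ((n + 2 : ℕ) : ℤ) = 2 * X * T ℝ ((n + 1 : ℕ) : ℤ) - T ℝ (n : ℤ) := by
    push_cast
    exact T_add_two ℝ n
  rw [secondary_eq_mul_eval_chebyshev_U (P := fun n : ℕ ↦ T ℝ n) (a := 1) (by simp) hT
    (fun n ↦ integralT_T_of_ne_zero (by omega))]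
  simp [secondary_X, integralT_one]

theorem secondary_integralU_U (x : ℝ) (n : ℕ) :
    secondary integralU x (U ℝ n) = π * (U ℝ (n - 1)).eval x := by
  have hU (n : ℕ) : U ℝ ((n + 2 : ℕ) : ℤ) = 2 * X * U ℝ ((n + 1 : ℕ) : ℤ) - U ℝ (n : ℤ) := by
    push_cast
    exact U_add_two ℝ n
  rw [secondary_eq_mul_eval_chebyshev_U (P := fun n : ℕ ↦ U ℝ n) (a := 1) (by simp) hU
    (fun n ↦ integralU_U_of_ne_zero (by omega))]
  rw [Nat.cast_one, U_one, ← C_ofNat, C_mul', map_smul, secondary_X, integralU_one, smul_eq_mul]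
  ring

theorem setIntegral_Ioo_div_sqrt_eq_integral_measureT (f : ℝ → ℝ) :
    ∫ u in Ioo (-1 : ℝ) 1, f u / √(1 - u ^ 2) = ∫ u, f u ∂measureT := by
  rw [integral_measureT, intervalIntegral.integral_of_le (by norm_num),
    integral_Ioc_eq_integral_Ioo]
  simp_rw [div_eq_mul_inv, sqrt_inv]

theorem setIntegral_sub_div_mul_sqrt (p : ℝ[X]) (x : ℝ) :
    ∫ u in Ioo (-1 : ℝ) 1, (p.eval u - p.eval x) / ((u - x) * √(1 - u ^ 2)) =
      secondary integralT x p := by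
  rw [secondary_apply, integralT_apply, ← setIntegral_Ioo_div_sqrt_eq_integral_measureT]
  refine setIntegral_congr_ae measurableSet_Ioo ?_
  filter_upwards [Measure.ae_ne volume x] with u hu _
  rw [← sub_mul_eval_divDiff, mul_div_mul_left _ _ (sub_ne_zero.mpr hu)]

theorem setIntegral_sub_mul_sqrt_div (p : ℝ[X]) (x : ℝ) :
    ∫ u in Ioo (-1 : ℝ) 1, (p.eval u - p.eval x) * √(1 - u ^ 2) / (u - x) =
      secondary integralU x p := by
  rw [secondary_apply, integralU_apply, integralT_apply,
    ← setIntegral_Ioo_div_sqrt_eq_integral_measureT]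
  refine setIntegral_congr_ae measurableSet_Ioo ?_
  filter_upwards [Measure.ae_ne volume x] with u hu hu₁
  have hpos : 0 < 1 - u ^ 2 := by nlinarith [hu₁.1, hu₁.2]
  have hux : u - x ≠ 0 := sub_ne_zero.mpr hu
  have hsqrt : √(1 - u ^ 2) ≠ 0 := (sqrt_pos.mpr hpos).ne'
  rw [← sub_mul_eval_divDiff, eval_mul, eval_sub, eval_one, eval_pow, eval_X]
  field_simp
  rw [sq_sqrt hpos.le]

theorem exists_secondary_integralT_eq_secondary_integralU (p : ℝ[X]) :
    ∃ G : ℝ[X], ∀ x, secondary integralT x p = π * G.eval x ∧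
      secondary integralU x (p + X * G) = π * G.eval x := by
  have hp : p ∈ Submodule.span ℝ (Set.range (chebyshevTsequence ℝ)) := by
    rw [(chebyshevTsequence ℝ).span fun n ↦ isUnit_iff_ne_zero.mpr
      (leadingCoeff_ne_zero.mpr ((chebyshevTsequence ℝ).ne_zero n))]
    exact Submodule.mem_top
  induction hp using Submodule.span_induction with
  | mem q hq =>
    obtain ⟨n, rfl⟩ := hq
    refine ⟨U ℝ (n - 1), fun x ↦ ⟨secondary_integralT_T x n, ?_⟩⟩
    have hU := U_eq_X_mul_U_add_T ℝ (n - 1)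
    rw [sub_add_cancel] at hU
    rw [show chebyshevTsequence ℝ n = T ℝ n from rfl, add_comm, ← hU, secondary_integralU_U]
  | zero => exact ⟨0, fun x ↦ by simp⟩
  | add p q _ _ hp hq =>
    obtain ⟨G, hG⟩ := hp
    obtain ⟨H, hH⟩ := hq
    refine ⟨G + H, fun x ↦ ⟨?_, ?_⟩⟩
    · rw [map_add, (hG x).1, (hH x).1, eval_add, mul_add]
    · rw [mul_add, add_add_add_comm, map_add, (hG x).2, (hH x).2, eval_add, mul_add]
  | smul c p _ hp =>
    obtain ⟨G, hG⟩ := hp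
    refine ⟨c • G, fun x ↦ ⟨?_, ?_⟩⟩
    · rw [map_smul, (hG x).1, eval_smul, smul_eq_mul, smul_eq_mul, mul_left_comm]
    · rw [mul_smul_comm, ← smul_add, map_smul, (hG x).2, eval_smul, smul_eq_mul, smul_eq_mul,
        mul_left_comm]

end Chebyshev

end Polynomial

theorem stmt_14_general (p : Polynomial ℝ)
    (W : ℝ → ℝ)
    (hW : ∀ x, W x = p.eval x + x * ((1 / Real.pi) *
      ∫ u in Ioo (-1 : ℝ) 1,
        (p.eval u - p.eval x) / ((u - x) * Real.sqrt (1 - u ^ 2)))) :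
    ∀ x ∈ Ioo (-1 : ℝ) 1,
      W x - (x / 2) * ((2 / Real.pi) *
          ∫ u in Ioo (-1 : ℝ) 1, (W u - W x) * Real.sqrt (1 - u ^ 2) / (u - x))
        = p.eval x := by
  intro x _
  obtain ⟨G, hG⟩ := Chebyshev.exists_secondary_integralT_eq_secondary_integralU p
  have hWG (u : ℝ) : W u = (p + X * G).eval u := by
    rw [hW, Chebyshev.setIntegral_sub_div_mul_sqrt, (hG u).1, eval_add, eval_mul, eval_X]
    field_simp [Real.pi_ne_zero]
  simp only [hWG]
  rw [Chebyshev.setIntegral_sub_mul_sqrt_div, (hG x).2, eval_add, eval_mul, eval_X]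
  field_simp [Real.pi_ne_zero]
  ring

/-- With `T`, `T₂` the secondary operators for the Chebyshev
weights of second and first kind, and `V(h) = h − (x/2)T(h)`,
`W(g) = g + x·T₂(g)`, one has `V(W(f)) = f` for every polynomial `f` of mean
zero against the second-kind weight. -/
theorem stmt_14 (p : Polynomial ℝ)
    (h0 : ∫ x in Ioo (-1 : ℝ) 1,
      p.eval x * (2 / Real.pi * Real.sqrt (1 - x ^ 2)) = 0)
    (W : ℝ → ℝ)
    (hW : ∀ x, W x = p.eval x + x * ((1 / Real.pi) *
      ∫ u in Ioo (-1 : ℝ) 1,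
        (p.eval u - p.eval x) / ((u - x) * Real.sqrt (1 - u ^ 2)))) :
    ∀ x ∈ Ioo (-1 : ℝ) 1,
      W x - (x / 2) * ((2 / Real.pi) *
          ∫ u in Ioo (-1 : ℝ) 1, (W u - W x) * Real.sqrt (1 - u ^ 2) / (u - x))
        = p.eval x :=
  stmt_14_general p W hW
end

section
/- Let ρ be a probability density on compact I with first moment c₁. For the family of equi-normal densities ρ_t (secondary measure t·μ, first moment c₁) and s,t > 0, the iterated construction satisfies (ρ_t)_s = ρ_{t·s}: the density obtained from ρ_t by the parameter s equals the density obtained from ρ by the parameter t·s. -/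
/-!
The relation defining `ρ_t` says `S_{ρ_t} = M_t(S_ρ)` for the Möbius map
`M_t(G) = G / (t + (1 - t)(z - c₁) G)`, and `M_s ∘ M_t = M_{ts}`; so `(ρ_t)_s` and `ρ_{ts}` have
the same Stieltjes transform `S` on `(b, ∞)`. This transform determines an integrable function `g`
on `[a, b]` up to null sets: since `S_{u g}(x) = x S_g(x) - ∫ g` and `S_{u g}(x) → 0` as `x → ∞`,
if `S_g` vanishes then so do all moments of `g`; by Weierstrass approximation `g` is then
orthogonal to every continuous function, hence zero a.e.
-/

open MeasureTheory Set Filter Topology Polynomial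

noncomputable def stieltjes (a b : ℝ) (f : ℝ → ℝ) (x : ℝ) : ℝ :=
  ∫ u in Icc a b, f u / (x - u)

lemma Complex.ofReal_stieltjes (a b : ℝ) (f : ℝ → ℝ) (x : ℝ) :
    (stieltjes a b f x : ℂ) = ∫ u in Icc a b, (f u : ℂ) / ((x : ℂ) - (u : ℂ)) := by
  rw [stieltjes, ← integral_complex_ofReal]
  simp only [Complex.ofReal_div, Complex.ofReal_sub]

lemma eq_of_equiNormal_comp {K : Type*} [Field K] {t s w G Gt Gσ Gts : K}
    (ht : t ≠ 0) (hs : s ≠ 0)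
    (h_t : Gt * (t + (1 - t) * w * G) = G) (h_s : Gσ * (s + (1 - s) * w * Gt) = Gt)
    (h_ts : Gts * (t * s + (1 - t * s) * w * G) = G) :
    Gσ = Gts := by
  have hD : t * s + (1 - t * s) * w * G ≠ 0 := by
    intro hD
    have hG : G = 0 := by rw [← h_ts, hD, mul_zero]
    simp [hG, ht, hs] at hD
  refine mul_right_cancel₀ hD ?_
  linear_combination (1 - (1 - s) * w * Gσ) * h_t + (t + (1 - t) * w * G) * h_s - h_ts

section Stieltjes

variable {a b : ℝ} {f g : ℝ → ℝ}

lemma MeasureTheory.IntegrableOn.div_sub_of_lt (hf : IntegrableOn f (Icc a b)) {x : ℝ}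
    (hx : b < x) : IntegrableOn (fun u => f u / (x - u)) (Icc a b) := by
  have hinv : ContinuousOn (fun u => (x - u)⁻¹) (Icc a b) :=
    ContinuousOn.inv₀ (by fun_prop) fun u hu => by linarith [hu.2]
  simpa only [div_eq_mul_inv] using hf.mul_continuousOn hinv isCompact_Icc

lemma abs_stieltjes_le (hf : IntegrableOn f (Icc a b)) {x : ℝ} (hx : b < x) :
    |stieltjes a b f x| ≤ (∫ u in Icc a b, |f u|) / (x - b) :=
  calc |stieltjes a b f x| ≤ ∫ u in Icc a b, |f u / (x - u)| := abs_integral_le_integral_abs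
    _ ≤ ∫ u in Icc a b, |f u| / (x - b) := by
      refine setIntegral_mono_on (hf.div_sub_of_lt hx).abs (hf.abs.div_const _)
        measurableSet_Icc fun u hu => ?_
      rw [abs_div, abs_of_pos (by linarith [hu.2] : 0 < x - u)]
      exact div_le_div_of_nonneg_left (abs_nonneg _) (by linarith) (by linarith [hu.2])
    _ = (∫ u in Icc a b, |f u|) / (x - b) := integral_div _ _

lemma tendsto_stieltjes_atTop (hf : IntegrableOn f (Icc a b)) :
    Tendsto (stieltjes a b f) atTop (𝓝 0) := by
  have hden : Tendsto (fun x : ℝ => x - b) atTop atTop :=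
    tendsto_atTop_add_const_right atTop (-b) tendsto_id
  refine squeeze_zero_norm' ?_
    ((tendsto_const_nhds (x := ∫ u in Icc a b, |f u|)).div_atTop hden)
  filter_upwards [eventually_gt_atTop b] with x hx using abs_stieltjes_le hf hx

lemma stieltjes_id_mul (hg : IntegrableOn g (Icc a b)) {x : ℝ} (hx : b < x) :
    stieltjes a b (fun u => u * g u) x = x * stieltjes a b g x - ∫ u in Icc a b, g u := by
  rw [stieltjes, stieltjes, ← integral_const_mul,
    ← integral_sub ((hg.div_sub_of_lt hx).const_mul x) hg]
  refine setIntegral_congr_fun measurableSet_Icc fun u hu => ?_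
  have : x - u ≠ 0 := by linarith [hu.2]
  field_simp
  ring

lemma integral_eq_zero_of_stieltjes_eq_zero (hg : IntegrableOn g (Icc a b))
    (h : ∀ x > b, stieltjes a b g x = 0) : ∫ u in Icc a b, g u = 0 := by
  have hconst : stieltjes a b (fun u => u * g u) =ᶠ[atTop] fun _ => -∫ u in Icc a b, g u := by
    filter_upwards [eventually_gt_atTop b] with x hx
    rw [stieltjes_id_mul hg hx, h x hx]
    ring
  have hlim := (tendsto_stieltjes_atTop
    (hg.continuousOn_mul continuousOn_id isCompact_Icc)).congr' hconst
  exact neg_eq_zero.mp (tendsto_nhds_unique tendsto_const_nhds hlim)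

lemma stieltjes_id_mul_eq_zero (hg : IntegrableOn g (Icc a b))
    (h : ∀ x > b, stieltjes a b g x = 0) : ∀ x > b, stieltjes a b (fun u => u * g u) x = 0 := by
  intro x hx
  rw [stieltjes_id_mul hg hx, h x hx, integral_eq_zero_of_stieltjes_eq_zero hg h]
  ring

lemma moments_eq_zero_of_stieltjes_eq_zero (hf : IntegrableOn f (Icc a b))
    (h : ∀ x > b, stieltjes a b f x = 0) (n : ℕ) : ∫ u in Icc a b, u ^ n * f u = 0 := by
  have hint : ∀ n : ℕ, IntegrableOn (fun u => u ^ n * f u) (Icc a b) := fun n =>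
    hf.continuousOn_mul (continuousOn_pow n) isCompact_Icc
  suffices ∀ n : ℕ, ∀ x > b, stieltjes a b (fun u => u ^ n * f u) x = 0 from
    integral_eq_zero_of_stieltjes_eq_zero (hint n) (this n)
  intro n
  induction n with
  | zero => simpa using h
  | succ n ih => simpa only [pow_succ', mul_assoc] using stieltjes_id_mul_eq_zero (hint n) ih

lemma integral_polynomial_mul_eq_zero (hf : IntegrableOn f (Icc a b))
    (hmom : ∀ n : ℕ, ∫ u in Icc a b, u ^ n * f u = 0) (p : ℝ[X]) :
    ∫ u in Icc a b, p.eval u * f u = 0 := by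
  simp_rw [eval_eq_sum_range, Finset.sum_mul, mul_assoc]
  rw [integral_finsetSum _ fun i _ => ?_]
  · refine Finset.sum_eq_zero fun i _ => ?_
    rw [integral_const_mul, hmom, mul_zero]
  · exact (hf.continuousOn_mul (continuousOn_pow i) isCompact_Icc).const_mul _

lemma integral_mul_eq_zero_of_moments_eq_zero (hf : IntegrableOn f (Icc a b))
    (hmom : ∀ n : ℕ, ∫ u in Icc a b, u ^ n * f u = 0) (hg : ContinuousOn g (Icc a b)) :
    ∫ u in Icc a b, g u * f u = 0 := by
  set N := ∫ u in Icc a b, |f u|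
  have hN : 0 ≤ N := integral_nonneg fun _ => abs_nonneg _
  refine eq_of_forall_dist_le fun δ hδ => ?_
  obtain ⟨p, hp⟩ :=
    exists_polynomial_near_of_continuousOn a b g hg (δ / (N + 1)) (by positivity)
  have hgf := hf.continuousOn_mul hg isCompact_Icc
  have hpf := hf.continuousOn_mul p.continuous.continuousOn isCompact_Icc
  have hgpf : ∫ u in Icc a b, (g u - p.eval u) * f u = ∫ u in Icc a b, g u * f u := by
    simp_rw [sub_mul]
    rw [integral_sub hgf hpf, integral_polynomial_mul_eq_zero hf hmom p, sub_zero]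
  rw [Real.dist_eq, sub_zero, ← hgpf]
  calc |∫ u in Icc a b, (g u - p.eval u) * f u|
      ≤ ∫ u in Icc a b, |(g u - p.eval u) * f u| := abs_integral_le_integral_abs
    _ ≤ ∫ u in Icc a b, δ / (N + 1) * |f u| := by
      refine setIntegral_mono_on
        (hf.continuousOn_mul (hg.sub p.continuous.continuousOn) isCompact_Icc).abs
        (hf.abs.const_mul _) measurableSet_Icc fun u hu => ?_
      rw [abs_mul, abs_sub_comm]
      exact mul_le_mul_of_nonneg_right (hp u hu).le (abs_nonneg _)
    _ = δ / (N + 1) * N := integral_const_mul _ _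
    _ ≤ δ := by
      rw [div_mul_eq_mul_div, div_le_iff₀ (by positivity)]
      nlinarith

lemma ae_eq_zero_of_stieltjes_eq_zero (hf : IntegrableOn f (Icc a b))
    (h : ∀ x > b, stieltjes a b f x = 0) : f =ᵐ[volume.restrict (Icc a b)] 0 :=
  ae_eq_zero_of_integral_contDiff_smul_eq_zero hf.locallyIntegrable fun _ hg _ =>
    integral_mul_eq_zero_of_moments_eq_zero hf (moments_eq_zero_of_stieltjes_eq_zero hf h)
      hg.continuous.continuousOn

lemma ae_eq_of_stieltjes_eq {f₁ f₂ : ℝ → ℝ} (hf₁ : IntegrableOn f₁ (Icc a b))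
    (hf₂ : IntegrableOn f₂ (Icc a b))
    (h : ∀ x > b, stieltjes a b f₁ x = stieltjes a b f₂ x) :
    f₁ =ᵐ[volume.restrict (Icc a b)] f₂ := by
  have hsub : ∀ x > b, stieltjes a b (f₁ - f₂) x = 0 := fun x hx => by
    simp_rw [stieltjes, Pi.sub_apply, sub_div]
    rw [integral_sub (hf₁.div_sub_of_lt hx) (hf₂.div_sub_of_lt hx)]
    exact sub_eq_zero.mpr (h x hx)
  filter_upwards [ae_eq_zero_of_stieltjes_eq_zero (hf₁.sub hf₂) hsub] with u hu
  exact sub_eq_zero.mp hu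

end Stieltjes

theorem stmt_15_general (a b : ℝ) (ρ ρt σ ρts : ℝ → ℝ) (t s c₁ : ℝ)
    (ht : 0 < t) (hs : 0 < s)
    (hσ1 : ∫ x in Icc a b, σ x = 1)
    (hρts1 : ∫ x in Icc a b, ρts x = 1)
    -- ρ_t equi-normal with ρ, parameter t
    (hrel_t : ∀ z ∉ (fun x : ℝ => (x : ℂ)) '' Icc a b,
      (∫ u in Icc a b, (ρt u : ℂ) / (z - (u : ℂ))) *
          ((t : ℂ) + (1 - (t : ℂ)) * (z - (c₁ : ℂ)) *
            ∫ u in Icc a b, (ρ u : ℂ) / (z - (u : ℂ)))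
        = ∫ u in Icc a b, (ρ u : ℂ) / (z - (u : ℂ)))
    -- σ = (ρ_t)_s : equi-normal with ρ_t, parameter s
    (hrel_s : ∀ z ∉ (fun x : ℝ => (x : ℂ)) '' Icc a b,
      (∫ u in Icc a b, (σ u : ℂ) / (z - (u : ℂ))) *
          ((s : ℂ) + (1 - (s : ℂ)) * (z - (c₁ : ℂ)) *
            ∫ u in Icc a b, (ρt u : ℂ) / (z - (u : ℂ)))
        = ∫ u in Icc a b, (ρt u : ℂ) / (z - (u : ℂ)))
    -- ρ_{t·s} equi-normal with ρ, parameter t·s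
    (hrel_ts : ∀ z ∉ (fun x : ℝ => (x : ℂ)) '' Icc a b,
      (∫ u in Icc a b, (ρts u : ℂ) / (z - (u : ℂ))) *
          (((t * s : ℝ) : ℂ) + (1 - ((t * s : ℝ) : ℂ)) * (z - (c₁ : ℂ)) *
            ∫ u in Icc a b, (ρ u : ℂ) / (z - (u : ℂ)))
        = ∫ u in Icc a b, (ρ u : ℂ) / (z - (u : ℂ))) :
    ∀ᵐ x ∂(volume.restrict (Icc a b)), σ x = ρts x := by
  have hz : ∀ x > b, (x : ℂ) ∉ (fun x : ℝ => (x : ℂ)) '' Icc a b := by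
    rintro x hx ⟨u, hu, hux⟩
    exact (hu.2.trans_lt hx).ne (Complex.ofReal_injective hux)
  refine ae_eq_of_stieltjes_eq (Integrable.of_integral_ne_zero (hσ1 ▸ one_ne_zero))
    (Integrable.of_integral_ne_zero (hρts1 ▸ one_ne_zero)) fun x hx => ?_
  apply Complex.ofReal_injective
  simp only [Complex.ofReal_stieltjes]
  refine eq_of_equiNormal_comp (Complex.ofReal_ne_zero.mpr ht.ne')
    (Complex.ofReal_ne_zero.mpr hs.ne') (hrel_t x (hz x hx)) (hrel_s x (hz x hx)) ?_
  simpa only [Complex.ofReal_mul] using hrel_ts x (hz x hx)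

/-- The iterated equi-normal construction satisfies
`(ρ_t)_s = ρ_{t·s}` (as densities, a.e. on `I`). -/
theorem stmt_15 (a b : ℝ) (hab : a < b) (ρ ρt σ ρts : ℝ → ℝ) (t s c₁ : ℝ)
    (ht : 0 < t) (hs : 0 < s)
    (hρ : ∀ x ∈ Icc a b, 0 ≤ ρ x) (hρ1 : ∫ x in Icc a b, ρ x = 1)
    (hρt : ∀ x ∈ Icc a b, 0 ≤ ρt x) (hρt1 : ∫ x in Icc a b, ρt x = 1)
    (hσ : ∀ x ∈ Icc a b, 0 ≤ σ x) (hσ1 : ∫ x in Icc a b, σ x = 1)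
    (hρts : ∀ x ∈ Icc a b, 0 ≤ ρts x) (hρts1 : ∫ x in Icc a b, ρts x = 1)
    (hc₁ : c₁ = ∫ x in Icc a b, x * ρ x)
    (hc₁t : c₁ = ∫ x in Icc a b, x * ρt x)
    (hc₁σ : c₁ = ∫ x in Icc a b, x * σ x)
    (hc₁ts : c₁ = ∫ x in Icc a b, x * ρts x)
    -- ρ_t equi-normal with ρ, parameter t
    (hrel_t : ∀ z ∉ (fun x : ℝ => (x : ℂ)) '' Icc a b,
      (∫ u in Icc a b, (ρt u : ℂ) / (z - (u : ℂ))) *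
          ((t : ℂ) + (1 - (t : ℂ)) * (z - (c₁ : ℂ)) *
            ∫ u in Icc a b, (ρ u : ℂ) / (z - (u : ℂ)))
        = ∫ u in Icc a b, (ρ u : ℂ) / (z - (u : ℂ)))
    -- σ = (ρ_t)_s : equi-normal with ρ_t, parameter s
    (hrel_s : ∀ z ∉ (fun x : ℝ => (x : ℂ)) '' Icc a b,
      (∫ u in Icc a b, (σ u : ℂ) / (z - (u : ℂ))) *
          ((s : ℂ) + (1 - (s : ℂ)) * (z - (c₁ : ℂ)) *
            ∫ u in Icc a b, (ρt u : ℂ) / (z - (u : ℂ)))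
        = ∫ u in Icc a b, (ρt u : ℂ) / (z - (u : ℂ)))
    -- ρ_{t·s} equi-normal with ρ, parameter t·s
    (hrel_ts : ∀ z ∉ (fun x : ℝ => (x : ℂ)) '' Icc a b,
      (∫ u in Icc a b, (ρts u : ℂ) / (z - (u : ℂ))) *
          (((t * s : ℝ) : ℂ) + (1 - ((t * s : ℝ) : ℂ)) * (z - (c₁ : ℂ)) *
            ∫ u in Icc a b, (ρ u : ℂ) / (z - (u : ℂ)))
        = ∫ u in Icc a b, (ρ u : ℂ) / (z - (u : ℂ))) :
    ∀ᵐ x ∂(volume.restrict (Icc a b)), σ x = ρts x :=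
  stmt_15_general a b ρ ρt σ ρts t s c₁ ht hs hσ1 hρts1 hrel_t hrel_s hrel_ts
end

section
/- Let ρ be a continuous probability density on compact I with reducer φ and secondary measure density μ(x) = ρ(x)/(φ²(x)/4 + π²ρ²(x)). Suppose the boundary limits of S_ρ exist: lim_{ε→0⁺} S_ρ(x±iε) = φ(x)/2 ∓ iπρ(x). Then applying the Stieltjes–Perron inversion to H(z) = S_ρ(z)/(t + (1−t)(z−c₁)S_ρ(z)) yields ρ_t(x) = t·ρ(x) / ([(t−1)(x−c₁)φ(x)/2 − t]² + π²ρ²(x)(t−1)²(x−c₁)²). -/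
/-!
Off the real axis `H = S_ρ / (t + s S_ρ)` with the real slope `s = (1 - t)(x - c₁)`, so at a point
`x` of `I` the boundary values of `H` are this real Möbius map applied to the conjugate pair
`L̄ = S_ρ(x - i0)`, `L = S_ρ(x + i0)`. For such a map `L̄/(t + sL̄) - L/(t + sL) = t(L̄ - L)/|t + sL|²`,
and `L̄ - L = 2iπρ(x)` turns the Stieltjes–Perron quotient into `tρ(x)/|t + sL|²`.
-/

open MeasureTheory Set Filter Complex ComplexConjugate Topology

lemma conj_div_sub_div_eq (t s : ℝ) (w : ℂ) :
    conj w / (t + s * conj w) - w / (t + s * w) = t * (conj w - w) / normSq (t + s * w) := by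
  have hconj : (t : ℂ) + s * conj w = conj ((t : ℂ) + s * w) := by simp
  rw [hconj, ← mul_conj]
  rcases eq_or_ne ((t : ℂ) + s * w) 0 with hD | hD
  · simp [hD]
  · rw [div_sub_div _ _ ((map_ne_zero _).mpr hD) hD]
    congr 1
    · simp only [map_add, map_mul, conj_ofReal]
      ring
    · exact mul_comm _ _

lemma tendsto_of_eq_div_affine {α : Type*} {S H : ℂ → ℂ} {t c : ℂ}
    (hH : ∀ z : ℂ, z.im ≠ 0 → H z = S z / (t + (1 - t) * (z - c) * S z))
    {l : Filter α} {z : α → ℂ} {z₀ L : ℂ} (hz : Tendsto z l (𝓝 z₀))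
    (him : ∀ᶠ e in l, (z e).im ≠ 0) (hS : Tendsto (fun e => S (z e)) l (𝓝 L))
    (hD : t + (1 - t) * (z₀ - c) * L ≠ 0) :
    Tendsto (fun e => H (z e)) l (𝓝 (L / (t + (1 - t) * (z₀ - c) * L))) := by
  refine (hS.div (tendsto_const_nhds.add
    ((tendsto_const_nhds.mul (hz.sub tendsto_const_nhds)).mul hS)) hD).congr' ?_
  filter_upwards [him] with e he using (hH _ he).symm

lemma tendsto_ofReal_add_I_mul_nhdsGT (x : ℝ) :
    Tendsto (fun ε : ℝ => (x : ℂ) + I * ε) (𝓝[>] 0) (𝓝 x) :=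
  (Continuous.tendsto' (by fun_prop) 0 _ (by simp)).mono_left nhdsWithin_le_nhds

lemma tendsto_ofReal_sub_I_mul_nhdsGT (x : ℝ) :
    Tendsto (fun ε : ℝ => (x : ℂ) - I * ε) (𝓝[>] 0) (𝓝 x) :=
  (Continuous.tendsto' (by fun_prop) 0 _ (by simp)).mono_left nhdsWithin_le_nhds

lemma eventually_im_ne_zero_add (x : ℝ) : ∀ᶠ ε : ℝ in 𝓝[>] 0, ((x : ℂ) + I * ε).im ≠ 0 := by
  filter_upwards [self_mem_nhdsWithin] with ε (hε : 0 < ε)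
  simpa using hε.ne'

lemma eventually_im_ne_zero_sub (x : ℝ) : ∀ᶠ ε : ℝ in 𝓝[>] 0, ((x : ℂ) - I * ε).im ≠ 0 := by
  filter_upwards [self_mem_nhdsWithin] with ε (hε : 0 < ε)
  simpa using hε.ne'

theorem stmt_19_general (a b : ℝ) (ρ φ : ℝ → ℝ) (t c₁ : ℝ)
    (Sρ H : ℂ → ℂ)
    -- boundary values S_ρ(x ± i0) = φ(x)/2 ∓ iπρ(x)
    (hbp : ∀ x ∈ Icc a b,
      Tendsto (fun ε : ℝ => Sρ ((x : ℂ) + Complex.I * ε))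
        (nhdsWithin 0 (Ioi 0))
        (nhds ((φ x / 2 : ℝ) - Complex.I * (Real.pi * ρ x))))
    (hbm : ∀ x ∈ Icc a b,
      Tendsto (fun ε : ℝ => Sρ ((x : ℂ) - Complex.I * ε))
        (nhdsWithin 0 (Ioi 0))
        (nhds ((φ x / 2 : ℝ) + Complex.I * (Real.pi * ρ x))))
    (hdenb : ∀ x ∈ Icc a b,
      ((t - 1) * (x - c₁) * φ x / 2 - t) ^ 2
        + Real.pi ^ 2 * ρ x ^ 2 * (t - 1) ^ 2 * (x - c₁) ^ 2 ≠ 0)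
    (hH : ∀ z : ℂ, z.im ≠ 0 →
      H z = Sρ z / ((t : ℂ) + (1 - (t : ℂ)) * (z - (c₁ : ℂ)) * Sρ z)) :
    ∀ x ∈ Icc a b,
      Tendsto (fun ε : ℝ =>
          (H ((x : ℂ) - Complex.I * ε) - H ((x : ℂ) + Complex.I * ε)) /
            (2 * Complex.I * Real.pi))
        (nhdsWithin 0 (Ioi 0))
        (nhds ((t * ρ x /
          (((t - 1) * (x - c₁) * φ x / 2 - t) ^ 2
            + Real.pi ^ 2 * ρ x ^ 2 * (t - 1) ^ 2 * (x - c₁) ^ 2) : ℝ))) := by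
  intro x hx
  set s : ℝ := (1 - t) * (x - c₁)
  set w : ℂ := ((φ x / 2 : ℝ) : ℂ) - I * (Real.pi * ρ x)
  have hs : (1 - (t : ℂ)) * ((x : ℂ) - c₁) = s := by push_cast [s]; ring
  have hconj : conj w = ((φ x / 2 : ℝ) : ℂ) + I * (Real.pi * ρ x) := by
    simp only [w, map_sub, map_mul, conj_ofReal, conj_I]
    ring
  have hnormSq : normSq (t + s * w) = ((t - 1) * (x - c₁) * φ x / 2 - t) ^ 2
      + Real.pi ^ 2 * ρ x ^ 2 * (t - 1) ^ 2 * (x - c₁) ^ 2 := by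
    simp [w, s, normSq_apply]
    ring
  have hD : (t : ℂ) + s * w ≠ 0 := fun h ↦ hdenb x hx (by rw [← hnormSq, h, map_zero])
  have hDconj : (t : ℂ) + s * conj w ≠ 0 := by
    simpa using (map_ne_zero (starRingEnd ℂ)).mpr hD
  have hminus := tendsto_of_eq_div_affine hH (tendsto_ofReal_sub_I_mul_nhdsGT x)
    (eventually_im_ne_zero_sub x) (hconj ▸ hbm x hx) (by rwa [hs])
  have hplus := tendsto_of_eq_div_affine hH (tendsto_ofReal_add_I_mul_nhdsGT x)
    (eventually_im_ne_zero_add x) (hbp x hx) (by rwa [hs])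
  convert (hminus.sub hplus).div_const (2 * I * Real.pi) using 2
  rw [hs, conj_div_sub_div_eq, hnormSq]
  have hconj_sub : conj w - w = 2 * I * Real.pi * ρ x := by rw [hconj]; ring
  rw [hconj_sub]
  push_cast
  field_simp

/-- Stieltjes–Perron inversion applied to
`H(z) = S_ρ(z)/(t + (1−t)(z−c₁)S_ρ(z))` yields
`ρ_t(x) = t·ρ(x)/([(t−1)(x−c₁)φ(x)/2 − t]² + π²ρ²(x)(t−1)²(x−c₁)²)`. -/
theorem stmt_19 (a b : ℝ) (hab : a < b) (ρ φ : ℝ → ℝ) (t c₁ : ℝ) (ht : 0 < t)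
    (hρcont : ContinuousOn ρ (Icc a b))
    (hρ : ∀ x ∈ Icc a b, 0 ≤ ρ x) (hρ1 : ∫ x in Icc a b, ρ x = 1)
    (hc₁ : c₁ = ∫ x in Icc a b, x * ρ x)
    (hφ : ∀ x ∈ Icc a b,
      Tendsto (fun ε : ℝ =>
          2 * ∫ u in Icc a b, (x - u) * ρ u / ((x - u) ^ 2 + ε ^ 2))
        (nhdsWithin 0 (Ioi 0)) (nhds (φ x)))
    (Sρ H : ℂ → ℂ)
    (hSρ : ∀ z : ℂ, z.im ≠ 0 →
      Sρ z = ∫ u in Icc a b, (ρ u : ℂ) / (z - (u : ℂ)))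
    -- boundary values S_ρ(x ± i0) = φ(x)/2 ∓ iπρ(x)
    (hbp : ∀ x ∈ Icc a b,
      Tendsto (fun ε : ℝ => Sρ ((x : ℂ) + Complex.I * ε))
        (nhdsWithin 0 (Ioi 0))
        (nhds ((φ x / 2 : ℝ) - Complex.I * (Real.pi * ρ x))))
    (hbm : ∀ x ∈ Icc a b,
      Tendsto (fun ε : ℝ => Sρ ((x : ℂ) - Complex.I * ε))
        (nhdsWithin 0 (Ioi 0))
        (nhds ((φ x / 2 : ℝ) + Complex.I * (Real.pi * ρ x))))
    -- the denominator of H does not vanish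
    (hden : ∀ z : ℂ, z.im ≠ 0 →
      (t : ℂ) + (1 - (t : ℂ)) * (z - (c₁ : ℂ)) * Sρ z ≠ 0)
    (hdenb : ∀ x ∈ Icc a b,
      ((t - 1) * (x - c₁) * φ x / 2 - t) ^ 2
        + Real.pi ^ 2 * ρ x ^ 2 * (t - 1) ^ 2 * (x - c₁) ^ 2 ≠ 0)
    (hH : ∀ z : ℂ, z.im ≠ 0 →
      H z = Sρ z / ((t : ℂ) + (1 - (t : ℂ)) * (z - (c₁ : ℂ)) * Sρ z)) :
    ∀ x ∈ Icc a b,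
      Tendsto (fun ε : ℝ =>
          (H ((x : ℂ) - Complex.I * ε) - H ((x : ℂ) + Complex.I * ε)) /
            (2 * Complex.I * Real.pi))
        (nhdsWithin 0 (Ioi 0))
        (nhds ((t * ρ x /
          (((t - 1) * (x - c₁) * φ x / 2 - t) ^ 2
            + Real.pi ^ 2 * ρ x ^ 2 * (t - 1) ^ 2 * (x - c₁) ^ 2) : ℝ))) :=
  stmt_19_general a b ρ φ t c₁ Sρ H hbp hbm hdenb hH
end
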